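/- Let E be a real or complex Banach lattice and let y ∈ E with y ≥ 0. Then the following assertions are equivalent: (i) y is a quasi-interior point of the positive cone E₊; (ii) for every x ∈ E with x ≥ 0 one has ‖(y − sx)⁻‖ = o(s) as s ↓ 0. -/

import Mathlib

/-!
Substituting `t = 1/s`, one has `‖(y - s x)⁻‖ / s = ‖(t y - x)⁻‖`, so the second condition says
that `(t y - x)⁻ = (x - t y)⁺` tends to `0` as `t → ∞` for every `x ≥ 0`.
If this holds, `x` is the limit of `x - (x - t y)⁺ = x ∧ t y`, which lies in `E_y`.
Conversely, if `‖x - z‖ < ε` with `|z| ≤ c y`, then `x ≤ c y + |x - z|`, hence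
`(x - t y)⁺ ≤ |x - z|` for all `t ≥ c`.
Finally a closed subspace containing `E₊` is all of `E`, since every element is
`(u₁⁺ - u₁⁻) + i (u₂⁺ - u₂⁻)` with `u₁, u₂` real.
-/

open Filter Topology Asymptotics

noncomputable section

/-- A complex Banach lattice, axiomatized via its order (given by the positive cone),
its modulus map `cabs` and its canonical conjugation `conj`. -/
class ComplexBanachLattice (E : Type*) extends
    NormedAddCommGroup E, NormedSpace ℂ E, CompleteSpace E, PartialOrder E where
  /-- the modulus map `z ↦ |z|` -/
  cabs : E → E
  /-- the canonical conjugation of the complex Banach lattice -/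
  conj : E → E
  add_le_add_left' : ∀ a b : E, a ≤ b → ∀ c : E, c + a ≤ c + b
  smul_nonneg' : ∀ (r : ℝ) (x : E), 0 ≤ r → 0 ≤ x → 0 ≤ (r : ℂ) • x
  isClosed_nonneg : IsClosed {x : E | 0 ≤ x}
  cabs_nonneg : ∀ x : E, 0 ≤ cabs x
  cabs_of_nonneg : ∀ x : E, 0 ≤ x → cabs x = x
  cabs_eq_zero_iff : ∀ x : E, cabs x = 0 ↔ x = 0
  cabs_smul : ∀ (c : ℂ) (x : E), cabs (c • x) = (‖c‖ : ℂ) • cabs x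
  cabs_add_le : ∀ x y : E, cabs (x + y) ≤ cabs x + cabs y
  norm_cabs : ∀ x : E, ‖cabs x‖ = ‖x‖
  norm_mono : ∀ x y : E, cabs x ≤ cabs y → ‖x‖ ≤ ‖y‖
  conj_add : ∀ x y : E, conj (x + y) = conj x + conj y
  conj_smul : ∀ (c : ℂ) (x : E), conj (c • x) = (starRingEnd ℂ c) • conj x
  conj_conj : ∀ x : E, conj (conj x) = x
  conj_of_nonneg : ∀ x : E, 0 ≤ x → conj x = x
  cabs_conj : ∀ x : E, cabs (conj x) = cabs x
  cabs_isLUB : ∀ x : E, conj x = x → IsLUB {x, -x} (cabs x)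
  exists_lub : ∀ x y : E, conj x = x → conj y = y → ∃ z : E, IsLUB {x, y} z

open ComplexBanachLattice

/-- A bounded linear operator on a complex Banach lattice is positive
if it maps positive elements to positive elements. -/
def IsPosOp {E : Type*} [ComplexBanachLattice E] (T : E →L[ℂ] E) : Prop :=
  ∀ x : E, 0 ≤ x → 0 ≤ T x

/-- The negative part `u⁻ = (|u| - u)/2` of a (real) element `u`. -/
def negPart {E : Type*} [ComplexBanachLattice E] (u : E) : E :=
  ((2⁻¹ : ℝ) : ℂ) • (cabs u - u)

namespace ComplexBanachLattice

variable {E : Type*} [ComplexBanachLattice E]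

instance : IsOrderedAddMonoid E where
  add_le_add_left a b h c := by simpa only [add_comm _ c] using add_le_add_left' a b h c
  add_le_add_right a b h c := add_le_add_left' a b h c

instance : PosSMulMono ℝ E :=
  PosSMulMono.of_smul_nonneg fun r hr x hx => by
    simpa only [Complex.coe_smul] using smul_nonneg' r x hr hx

theorem norm_le_norm_of_nonneg_of_le {a b : E} (ha : 0 ≤ a) (hab : a ≤ b) : ‖a‖ ≤ ‖b‖ :=
  norm_mono a b (by rwa [cabs_of_nonneg a ha, cabs_of_nonneg b (ha.trans hab)])

theorem cabs_neg (a : E) : cabs (-a) = cabs a := by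
  simpa using cabs_smul (-1 : ℂ) a

theorem cabs_smul_of_nonneg {r : ℝ} (hr : 0 ≤ r) (a : E) : cabs (r • a) = r • cabs a := by
  simpa only [Complex.coe_smul, Complex.norm_real, Real.norm_of_nonneg hr] using
    cabs_smul (r : ℂ) a

theorem conj_neg (a : E) : conj (-a) = -conj a := by
  simpa using conj_smul (-1 : ℂ) a

theorem conj_sub (a b : E) : conj (a - b) = conj a - conj b := by
  rw [sub_eq_add_neg, conj_add, conj_neg, sub_eq_add_neg]

theorem conj_real_smul (r : ℝ) (a : E) : conj (r • a) = r • conj a := by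
  simpa only [Complex.coe_smul, Complex.conj_ofReal] using conj_smul (r : ℂ) a

theorem two_smul_negPart (u : E) : (2 : ℝ) • negPart u = cabs u - u := by
  rw [_root_.negPart, Complex.coe_smul, smul_smul]
  norm_num

/-- The real elements, i.e. the real Banach lattice `E_ℝ` inside its complexification `E`. -/
def IsReal (u : E) : Prop := conj u = u

theorem isReal_of_nonneg {x : E} (hx : 0 ≤ x) : IsReal x := conj_of_nonneg x hx

namespace IsReal

variable {u v : E}

theorem neg (hu : IsReal u) : IsReal (-u) := by
  rw [IsReal, conj_neg, hu]

theorem sub (hu : IsReal u) (hv : IsReal v) : IsReal (u - v) := by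
  rw [IsReal, conj_sub, hu, hv]

theorem smul (r : ℝ) (hu : IsReal u) : IsReal (r • u) := by
  rw [IsReal, conj_real_smul, hu]

theorem le_cabs (hu : IsReal u) : u ≤ cabs u :=
  (cabs_isLUB u hu).1 (Set.mem_insert _ _)

theorem neg_le_cabs (hu : IsReal u) : -u ≤ cabs u :=
  (cabs_isLUB u hu).1 (Set.mem_insert_of_mem _ rfl)

theorem negPart_nonneg (hu : IsReal u) : 0 ≤ negPart u := by
  rw [← smul_nonneg_iff_nonneg_of_pos_left (two_pos (α := ℝ)), two_smul_negPart, sub_nonneg]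
  exact hu.le_cabs

theorem neg_le_negPart (hu : IsReal u) : -u ≤ negPart u := by
  rw [← smul_le_smul_iff_of_pos_left (two_pos (α := ℝ)), two_smul_negPart, two_smul,
    ← sub_eq_neg_add]
  exact sub_le_sub_right hu.neg_le_cabs u

theorem negPart_le (hu : IsReal u) (h : -u ≤ v) (hv : 0 ≤ v) : negPart u ≤ v := by
  rw [← smul_le_smul_iff_of_pos_left (two_pos (α := ℝ)), two_smul_negPart, two_smul,
    sub_le_iff_le_add]
  refine (cabs_isLUB u hu).2 ?_
  rintro w (rfl | rfl)
  · exact le_add_of_nonneg_left (add_nonneg hv hv)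
  · calc -u = -u + -u + u := by abel
      _ ≤ v + v + u := by gcongr

end IsReal

theorem negPart_smul_of_nonneg {r : ℝ} (hr : 0 ≤ r) (u : E) :
    negPart (r • u) = r • negPart u := by
  rw [_root_.negPart, _root_.negPart, cabs_smul_of_nonneg hr, ← smul_sub, smul_comm]

theorem negPart_neg_sub_negPart (u : E) : negPart (-u) - negPart u = u := by
  rw [_root_.negPart, _root_.negPart, cabs_neg, ← smul_sub, Complex.coe_smul]
  module

theorem exists_isReal_add_I_smul (a : E) :
    ∃ u v : E, IsReal u ∧ IsReal v ∧ a = u + Complex.I • v := by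
  refine ⟨(2⁻¹ : ℝ) • (a + conj a), (2⁻¹ : ℝ) • Complex.I • (conj a - a), ?_, ?_, ?_⟩
  · rw [IsReal, conj_real_smul, conj_add, conj_conj, add_comm (conj a)]
  · rw [IsReal, conj_real_smul, conj_smul, conj_sub, conj_conj, Complex.conj_I, neg_smul,
      ← smul_neg, neg_sub]
  · rw [smul_comm, smul_smul, Complex.I_mul_I]
    module

theorem submodule_eq_top_of_forall_nonneg_mem {p : Submodule ℂ E}
    (hp : ∀ x : E, 0 ≤ x → x ∈ p) : p = ⊤ := by
  have hreal (u : E) (hu : IsReal u) : u ∈ p := by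
    simpa only [negPart_neg_sub_negPart] using
      p.sub_mem (hp _ hu.neg.negPart_nonneg) (hp _ hu.negPart_nonneg)
  refine Submodule.eq_top_iff'.2 fun a => ?_
  obtain ⟨u, v, hu, hv, rfl⟩ := exists_isReal_add_I_smul a
  exact p.add_mem (hreal u hu) (p.smul_mem _ (hreal v hv))

def principalIdeal (y : E) (hy : 0 ≤ y) : Submodule ℂ E where
  carrier := {z | ∃ c : ℝ, 0 < c ∧ cabs z ≤ c • y}
  zero_mem' := ⟨1, one_pos, by rwa [(cabs_eq_zero_iff 0).2 rfl, one_smul]⟩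
  add_mem' := by
    rintro a b ⟨c, hc, ha⟩ ⟨d, hd, hb⟩
    refine ⟨c + d, add_pos hc hd, (cabs_add_le a b).trans ?_⟩
    rw [add_smul]
    exact add_le_add ha hb
  smul_mem' := by
    rintro k a ⟨c, hc, ha⟩
    refine ⟨‖k‖ * c + c, by positivity, ?_⟩
    rw [cabs_smul, Complex.coe_smul, add_smul, mul_smul]
    exact (smul_le_smul_of_nonneg_left ha (norm_nonneg k)).trans
      (le_add_of_nonneg_right (smul_nonneg hc.le hy))

theorem negPart_smul_sub_le_cabs_sub {x y z : E} {c : ℝ} (hx : IsReal x) (hy : IsReal y)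
    (hz : cabs z ≤ c • y) : negPart (c • y - x) ≤ cabs (x - z) := by
  refine ((hy.smul c).sub hx).negPart_le ?_ (cabs_nonneg _)
  rw [neg_sub, sub_le_iff_le_add']
  calc x ≤ cabs x := hx.le_cabs
    _ = cabs (z + (x - z)) := by rw [add_sub_cancel]
    _ ≤ cabs z + cabs (x - z) := cabs_add_le _ _
    _ ≤ c • y + cabs (x - z) := by gcongr

theorem norm_negPart_smul_sub_le_norm_sub {x y z : E} {c : ℝ} (hx : IsReal x) (hy : IsReal y)
    (hz : cabs z ≤ c • y) : ‖negPart (c • y - x)‖ ≤ ‖x - z‖ := by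
  simpa only [norm_cabs] using norm_le_norm_of_nonneg_of_le ((hy.smul c).sub hx).negPart_nonneg
    (negPart_smul_sub_le_cabs_sub hx hy hz)

theorem antitone_norm_negPart_smul_sub {x y : E} (hx : IsReal x) (hy : 0 ≤ y) :
    Antitone fun t : ℝ => ‖negPart (t • y - x)‖ := by
  intro c t hct
  have hc : IsReal (c • y - x) := ((isReal_of_nonneg hy).smul c).sub hx
  have ht : IsReal (t • y - x) := ((isReal_of_nonneg hy).smul t).sub hx
  refine norm_le_norm_of_nonneg_of_le ht.negPart_nonneg (ht.negPart_le ?_ hc.negPart_nonneg)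
  calc -(t • y - x) ≤ -(c • y - x) := by gcongr
    _ ≤ negPart (c • y - x) := hc.neg_le_negPart

theorem sub_negPart_smul_sub_mem_principalIdeal {x y : E} (hx : 0 ≤ x) (hy : 0 ≤ y) {t : ℝ}
    (ht : 0 < t) : x - negPart (t • y - x) ∈ principalIdeal y hy := by
  have hreal : IsReal (t • y - x) := ((isReal_of_nonneg hy).smul t).sub (isReal_of_nonneg hx)
  have hle : negPart (t • y - x) ≤ x :=
    hreal.negPart_le (by rw [neg_sub]; exact sub_le_self x (smul_nonneg ht.le hy)) hx
  refine ⟨t, ht, ?_⟩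
  rw [cabs_of_nonneg _ (sub_nonneg.2 hle), sub_le_comm, ← neg_sub]
  exact hreal.neg_le_negPart

theorem tendsto_norm_negPart_of_mem_closure {x y : E} (hx : IsReal x) (hy : 0 ≤ y)
    (hxy : x ∈ closure (principalIdeal y hy : Set E)) :
    Tendsto (fun t : ℝ => ‖negPart (t • y - x)‖) atTop (𝓝 0) := by
  refine Metric.tendsto_atTop.2 fun ε hε => ?_
  obtain ⟨z, ⟨c, -, hz⟩, hxz⟩ := Metric.mem_closure_iff.1 hxy ε hε
  refine ⟨c, fun t hct => ?_⟩
  rw [Real.dist_0_eq_abs, abs_norm]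
  calc ‖negPart (t • y - x)‖ ≤ ‖negPart (c • y - x)‖ := antitone_norm_negPart_smul_sub hx hy hct
    _ ≤ ‖x - z‖ := norm_negPart_smul_sub_le_norm_sub hx (isReal_of_nonneg hy) hz
    _ < ε := by rwa [← dist_eq_norm]

theorem mem_closure_of_tendsto_norm_negPart {x y : E} (hx : 0 ≤ x) (hy : 0 ≤ y)
    (h : Tendsto (fun t : ℝ => ‖negPart (t • y - x)‖) atTop (𝓝 0)) :
    x ∈ closure (principalIdeal y hy : Set E) := by
  refine mem_closure_of_tendsto (f := fun t : ℝ => x - negPart (t • y - x)) ?_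
    ((eventually_gt_atTop 0).mono fun t ht => sub_negPart_smul_sub_mem_principalIdeal hx hy ht)
  rw [tendsto_iff_norm_sub_tendsto_zero]
  simpa only [sub_sub_cancel_left, norm_neg] using h

theorem dense_principalIdeal_iff (y : E) (hy : 0 ≤ y) :
    Dense (principalIdeal y hy : Set E) ↔
      ∀ x : E, 0 ≤ x → Tendsto (fun t : ℝ => ‖negPart (t • y - x)‖) atTop (𝓝 0) := by
  refine ⟨fun hd x hx => tendsto_norm_negPart_of_mem_closure (isReal_of_nonneg hx) hy (hd x),
    fun h => ?_⟩
  rw [Submodule.dense_iff_topologicalClosure_eq_top]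
  refine submodule_eq_top_of_forall_nonneg_mem fun x hx => ?_
  rw [← SetLike.mem_coe, Submodule.topologicalClosure_coe]
  exact mem_closure_of_tendsto_norm_negPart hx hy (h x hx)

theorem norm_negPart_sub_smul {s : ℝ} (hs : 0 < s) (x y : E) :
    ‖negPart (y - s • x)‖ = s * ‖negPart (s⁻¹ • y - x)‖ := by
  have h : y - s • x = s • (s⁻¹ • y - x) := by rw [smul_sub, smul_inv_smul₀ hs.ne']
  rw [h, negPart_smul_of_nonneg hs.le, norm_smul, Real.norm_of_nonneg hs.le]

theorem isLittleO_norm_negPart_sub_smul_iff (x y : E) :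
    (fun s : ℝ => ‖negPart (y - s • x)‖) =o[𝓝[>] 0] (fun s => s) ↔
      Tendsto (fun t : ℝ => ‖negPart (t • y - x)‖) atTop (𝓝 0) := by
  have hpos : ∀ᶠ s in 𝓝[>] (0 : ℝ), 0 < s := self_mem_nhdsWithin
  rw [isLittleO_iff_tendsto' (hpos.mono fun s hs h => absurd h hs.ne'), ← inv_nhdsGT_zero,
    ← Filter.map_inv, tendsto_map'_iff]
  refine tendsto_congr' (hpos.mono fun s hs => ?_)
  simp [norm_negPart_sub_smul hs, hs.ne']

end ComplexBanachLattice

/-- Corollary 4.7: for `y ≥ 0` in a Banach lattice, `y` is a quasi-interior point of the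
positive cone (i.e. the principal ideal `E_y` is dense) if and only if for every `x ≥ 0`
one has `‖(y - sx)⁻‖ = o(s)` as `s ↓ 0`. -/
theorem quasi_interior_point_iff
    {E : Type*} [ComplexBanachLattice E] (y : E) (hy : 0 ≤ y) :
    Dense {z : E | ∃ c : ℝ, 0 < c ∧ cabs z ≤ (c : ℂ) • y} ↔
    (∀ x : E, 0 ≤ x →
      (fun s : ℝ => ‖negPart (y - (s : ℂ) • x)‖) =o[𝓝[>] (0 : ℝ)] (fun s : ℝ => s)) := by
  simp only [Complex.coe_smul, isLittleO_norm_negPart_sub_smul_iff]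
  exact dense_principalIdeal_iff y hy
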